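/- For E > log 3 set z = exp(−3E) ∈ (0, 1/27) and define ξ(E) = (ϖ₁(z)·ϖ₂′(z) − ϖ₂(z)·ϖ₁′(z)) / (8π²·ϖ₁′(z)), where ϖ₁(z) = log z + ϖ̃₁(z) and ϖ₂(z) = log²z + 2ϖ̃₁(z)log z + ϖ̃₂(z) are the periods of local P² and ′ denotes d/dz. Then ξ(E) − 9E²/(8π²) tends to 0 as E → +∞. -/

import Mathlib

/-!
Write `L = log z`, so that `ϖ₁ = L + A` and `ϖ₂ = L² + 2AL + B` with `A = ϖ̃₁`, `B = ϖ̃₂`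
analytic at `0` and vanishing there. In the Wronskian `ϖ₁ϖ₂′ - ϖ₂ϖ₁′` the terms quadratic in `L`
add up to `L²ϖ₁′`, so `(ϖ₁ϖ₂′ - ϖ₂ϖ₁′)/ϖ₁′ - L²` is a quotient whose numerator is `O(z log z)`
and whose denominator `zϖ₁′ = 1 + zA′` tends to `1` as `z → 0⁺`. For `z = e^{-3E}` we have
`L² = 9E²`. Analyticity of `A` and `B` comes from the geometric growth of their coefficients,
via `(3j)! = C(3j, j) C(2j, j) (j!)³ ≤ 32^j (j!)³`.
-/

open Real Filter

/-- The `k`-th harmonic number `H_k = ∑_{i=1}^k 1/i`. -/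
noncomputable def harmonicNum (k : ℕ) : ℝ := ∑ i ∈ Finset.range k, (1 : ℝ) / (i + 1)

/-- The coefficients `c_j = 3 (3j-1)! / (j!)^3` of the logarithmic period of local P². -/
noncomputable def localP2c (j : ℕ) : ℝ :=
  3 * (Nat.factorial (3 * j - 1) : ℝ) / ((Nat.factorial j : ℝ)) ^ 3

/-- The coefficients `d_j = 18 (3j-1)! / (j!)^3 (H_{3j-1} - H_j)`. -/
noncomputable def localP2d (j : ℕ) : ℝ :=
  18 * (Nat.factorial (3 * j - 1) : ℝ) / ((Nat.factorial j : ℝ)) ^ 3 *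
    (harmonicNum (3 * j - 1) - harmonicNum j)

/-- The power-series part `ϖ̃₁(z) = ∑_{j ≥ 1} c_j (-z)^j` of the logarithmic period. -/
noncomputable def w1tilde (z : ℝ) : ℝ := ∑' j : ℕ, localP2c (j + 1) * (-z) ^ (j + 1)

/-- The power-series part `ϖ̃₂(z) = ∑_{j ≥ 1} d_j (-z)^j` of the double-logarithmic
period. -/
noncomputable def w2tilde (z : ℝ) : ℝ := ∑' j : ℕ, localP2d (j + 1) * (-z) ^ (j + 1)

/-- The logarithmic period `ϖ₁(z) = log z + ϖ̃₁(z)` of local P². -/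
noncomputable def w1 (z : ℝ) : ℝ := Real.log z + w1tilde z

/-- The double-logarithmic period `ϖ₂(z) = log² z + 2 ϖ̃₁(z) log z + ϖ̃₂(z)`. -/
noncomputable def w2 (z : ℝ) : ℝ :=
  (Real.log z) ^ 2 + 2 * w1tilde z * Real.log z + w2tilde z

/-- The function `ξ(E)` entering the exact quantization condition of local P² at
`ħ = 2π`, with `z = e^{-3E}`. -/
noncomputable def xiP2 (E : ℝ) : ℝ :=
  (w1 (Real.exp (-3 * E)) * deriv w2 (Real.exp (-3 * E)) -
      w2 (Real.exp (-3 * E)) * deriv w1 (Real.exp (-3 * E))) /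
    (8 * Real.pi ^ 2 * deriv w1 (Real.exp (-3 * E)))

open scoped Nat Topology

theorem Nat.factorial_three_mul_le (j : ℕ) : (3 * j)! ≤ 32 ^ j * j ! ^ 3 := by
  have h3 : (3 * j)! = (3 * j).choose j * (2 * j)! * j ! := by
    rw [show 3 * j = 2 * j + j by ring, Nat.add_choose_mul_factorial_mul_factorial]
  have h2 : (2 * j)! = (2 * j).choose j * j ! * j ! := by
    rw [two_mul, Nat.add_choose_mul_factorial_mul_factorial]
  calc (3 * j)! = (3 * j).choose j * (2 * j).choose j * j ! ^ 3 := by rw [h3, h2]; ring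
    _ ≤ 2 ^ (3 * j) * 2 ^ (2 * j) * j ! ^ 3 := by
      gcongr <;> exact Nat.choose_le_two_pow _ _
    _ = 32 ^ j * j ! ^ 3 := by
      rw [← pow_add, show 3 * j + 2 * j = 5 * j by ring, pow_mul]; norm_num

lemma harmonicNum_le (k : ℕ) : harmonicNum k ≤ k := by
  calc harmonicNum k ≤ ∑ _i ∈ Finset.range k, (1 : ℝ) :=
        Finset.sum_le_sum fun i _ => div_le_one_of_le₀ (by linarith [i.cast_nonneg (α := ℝ)])
          (by positivity)
    _ = k := by simp

lemma harmonicNum_nonneg (k : ℕ) : 0 ≤ harmonicNum k :=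
  Finset.sum_nonneg fun _ _ => by positivity

lemma harmonicNum_mono : Monotone harmonicNum := fun _ _ h =>
  Finset.sum_le_sum_of_subset_of_nonneg (Finset.range_subset_range.2 h) fun _ _ _ => by positivity

lemma localP2c_nonneg (j : ℕ) : 0 ≤ localP2c j := by
  unfold localP2c; positivity

lemma localP2c_succ_le (j : ℕ) : localP2c (j + 1) ≤ 32 ^ (j + 1) := by
  have hfac : 3 * (3 * j + 2)! ≤ 32 ^ (j + 1) * (j + 1)! ^ 3 :=
    calc 3 * (3 * j + 2)! ≤ (3 * j + 3) * (3 * j + 2)! := by gcongr; omega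
      _ = (3 * (j + 1))! := by
        rw [show 3 * (j + 1) = 3 * j + 2 + 1 by ring]; exact (Nat.factorial_succ _).symm
      _ ≤ 32 ^ (j + 1) * (j + 1)! ^ 3 := Nat.factorial_three_mul_le _
  rw [localP2c, div_le_iff₀ (by positivity), show 3 * (j + 1) - 1 = 3 * j + 2 by omega]
  exact_mod_cast hfac

lemma localP2d_eq_mul_localP2c (j : ℕ) :
    localP2d j = 6 * localP2c j * (harmonicNum (3 * j - 1) - harmonicNum j) := by
  unfold localP2d localP2c; ring

lemma localP2d_succ_nonneg (j : ℕ) : 0 ≤ localP2d (j + 1) := by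
  rw [localP2d_eq_mul_localP2c]
  exact mul_nonneg (mul_nonneg (by norm_num) (localP2c_nonneg _))
    (sub_nonneg.2 (harmonicNum_mono (by omega)))

lemma localP2d_succ_le (j : ℕ) : localP2d (j + 1) ≤ 18 * 64 ^ (j + 1) := by
  have hH : harmonicNum (3 * (j + 1) - 1) - harmonicNum (j + 1) ≤ 3 * 2 ^ (j + 1) :=
    calc _ ≤ harmonicNum (3 * (j + 1) - 1) := sub_le_self _ (harmonicNum_nonneg _)
      _ ≤ (3 * (j + 1) - 1 : ℕ) := harmonicNum_le _
      _ ≤ 3 * 2 ^ (j + 1) := by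
        have := Nat.lt_two_pow_self (n := j + 1)
        exact_mod_cast (show 3 * (j + 1) - 1 ≤ 3 * 2 ^ (j + 1) by omega)
  calc localP2d (j + 1) ≤ 6 * 32 ^ (j + 1) * (3 * 2 ^ (j + 1)) := by
        rw [localP2d_eq_mul_localP2c]
        have := localP2c_succ_le j
        have := harmonicNum_mono (show j + 1 ≤ 3 * (j + 1) - 1 by omega)
        gcongr
    _ = 18 * 64 ^ (j + 1) := by rw [show (64 : ℝ) = 32 * 2 by norm_num, mul_pow]; ring

namespace FormalMultilinearSeries

variable {𝕜 E : Type*} [NontriviallyNormedField 𝕜] [NormedRing E] [NormedAlgebra 𝕜 E]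
  [NormOneClass E]

theorem radius_ofScalars_pos_of_norm_le {c : ℕ → 𝕜} {C R : ℝ} (hR : 0 < R)
    (hc : ∀ n, ‖c n‖ ≤ C * R ^ n) : 0 < (ofScalars E c).radius := by
  refine lt_of_lt_of_le ?_ ((ofScalars E c).le_radius_of_bound C (r := R⁻¹.toNNReal)
    fun n => ?_)
  · exact ENNReal.coe_pos.2 (Real.toNNReal_pos.2 (inv_pos.2 hR))
  · rw [ofScalars_norm, Real.coe_toNNReal _ (by positivity), inv_pow, ← div_eq_mul_inv,
      div_le_iff₀ (by positivity)]
    exact hc n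

theorem analyticAt_ofScalarsSum_of_norm_le [CompleteSpace E] {c : ℕ → 𝕜} {C R : ℝ} (hR : 0 < R)
    (hc : ∀ n, ‖c n‖ ≤ C * R ^ n) : AnalyticAt 𝕜 (ofScalarsSum (E := E) c) 0 :=
  ((ofScalars E c).hasFPowerSeriesOnBall (radius_ofScalars_pos_of_norm_le hR hc)).analyticAt

end FormalMultilinearSeries

theorem analyticAt_tsum_mul_neg_pow_succ {a : ℕ → ℝ} {C R : ℝ} (hR : 0 < R)
    (ha : ∀ n, |a n| ≤ C * R ^ n) : AnalyticAt ℝ (fun z => ∑' n, a n * (-z) ^ (n + 1)) 0 := by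
  have hS := FormalMultilinearSeries.analyticAt_ofScalarsSum_of_norm_le (E := ℝ) hR
    fun n => (Real.norm_eq_abs _).trans_le (ha n)
  have heq : (fun z : ℝ => ∑' n, a n * (-z) ^ (n + 1)) =
      fun z => -z * FormalMultilinearSeries.ofScalarsSum a (-z) := by
    ext z
    simp only [FormalMultilinearSeries.ofScalars_sum_eq, smul_eq_mul, ← tsum_mul_left, pow_succ]
    exact tsum_congr fun n => by ring
  rw [heq]
  exact analyticAt_id.neg.mul (hS.comp_of_eq analyticAt_id.neg neg_zero)

theorem analyticAt_w1tilde : AnalyticAt ℝ w1tilde 0 :=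
  analyticAt_tsum_mul_neg_pow_succ (C := 32) (R := 32) (by norm_num) fun n => by
    rw [abs_of_nonneg (localP2c_nonneg _)]
    exact (localP2c_succ_le n).trans_eq (pow_succ' _ _)

theorem analyticAt_w2tilde : AnalyticAt ℝ w2tilde 0 :=
  analyticAt_tsum_mul_neg_pow_succ (C := 18 * 64) (R := 64) (by norm_num) fun n => by
    rw [abs_of_nonneg (localP2d_succ_nonneg _), mul_assoc]
    exact (localP2d_succ_le n).trans_eq (by rw [pow_succ'])

lemma w1tilde_zero : w1tilde 0 = 0 := by simp [w1tilde]

lemma w2tilde_zero : w2tilde 0 = 0 := by simp [w2tilde]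

lemma wronskian_div_sub_sq_eq {z L A B a b : ℝ} (hz : z ≠ 0) (ha : 1 + z * a ≠ 0) :
    ((L + A) * (2 * L * z⁻¹ + 2 * (a * L + A * z⁻¹) + b) - (L ^ 2 + 2 * A * L + B) * (z⁻¹ + a)) /
        (z⁻¹ + a) - L ^ 2 =
      (z * L * (2 * (A / z) + b) + 2 * A ^ 2 - B + z * (A * b - a * B)) / (1 + z * a) := by
  have : z⁻¹ + a = (1 + z * a) / z := by field_simp
  rw [this]
  field_simp
  ring

section Periods

variable {A B : ℝ → ℝ} {z a b : ℝ}

lemma hasDerivAt_log_add (hz : z ≠ 0) (hA : HasDerivAt A a z) :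
    HasDerivAt (fun z => log z + A z) (z⁻¹ + a) z :=
  (hasDerivAt_log hz).add hA

lemma hasDerivAt_log_sq_add (hz : z ≠ 0) (hA : HasDerivAt A a z) (hB : HasDerivAt B b z) :
    HasDerivAt (fun z => log z ^ 2 + 2 * A z * log z + B z)
      (2 * log z * z⁻¹ + 2 * (a * log z + A z * z⁻¹) + b) z := by
  refine ((((hasDerivAt_log hz).pow 2).add ((hA.const_mul 2).mul (hasDerivAt_log hz))).add
    hB).congr_deriv ?_
  push_cast
  ring

theorem tendsto_wronskian_div_deriv_sub_log_sq {ϖ₁ ϖ₂ : ℝ → ℝ} (hA : AnalyticAt ℝ A 0)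
    (hB : AnalyticAt ℝ B 0) (hA0 : A 0 = 0) (hB0 : B 0 = 0) (h₁ : ϖ₁ = fun z => log z + A z)
    (h₂ : ϖ₂ = fun z => log z ^ 2 + 2 * A z * log z + B z) :
    Tendsto (fun z => (ϖ₁ z * deriv ϖ₂ z - ϖ₂ z * deriv ϖ₁ z) / deriv ϖ₁ z - log z ^ 2)
      (𝓝[>] 0) (𝓝 0) := by
  subst h₁ h₂
  have hle : 𝓝[>] (0 : ℝ) ≤ 𝓝 0 := nhdsWithin_le_nhds
  have hz : Tendsto id (𝓝[>] (0 : ℝ)) (𝓝 0) := hle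
  have hzlog : Tendsto (fun z => z * log z) (𝓝[>] 0) (𝓝 0) := by
    simpa using continuous_mul_log.continuousAt.tendsto.mono_left hle
  have hAlim : Tendsto A (𝓝[>] 0) (𝓝 0) := (hA0 ▸ hA.continuousAt.tendsto).mono_left hle
  have hBlim : Tendsto B (𝓝[>] 0) (𝓝 0) := (hB0 ▸ hB.continuousAt.tendsto).mono_left hle
  have ha : Tendsto (deriv A) (𝓝[>] 0) (𝓝 (deriv A 0)) :=
    hA.deriv.continuousAt.tendsto.mono_left hle
  have hb : Tendsto (deriv B) (𝓝[>] 0) (𝓝 (deriv B 0)) :=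
    hB.deriv.continuousAt.tendsto.mono_left hle
  -- `log z * A z = (z log z) (A z / z)`, and `A z / z` is a difference quotient of `A` at `0`
  have hslope : Tendsto (fun z => A z / z) (𝓝[>] 0) (𝓝 (deriv A 0)) := by
    refine ((hasDerivAt_iff_tendsto_slope.1 hA.differentiableAt.hasDerivAt).mono_left
      (nhdsGT_le_nhdsNE 0)).congr fun z => ?_
    rw [slope_def_field, hA0, sub_zero, sub_zero]
  have hden : Tendsto (fun z => 1 + z * deriv A z) (𝓝[>] 0) (𝓝 1) := by
    simpa using tendsto_const_nhds.add (hz.mul ha)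
  have hnum : Tendsto (fun z => z * log z * (2 * (A z / z) + deriv B z) + 2 * A z ^ 2 - B z +
      z * (A z * deriv B z - deriv A z * B z)) (𝓝[>] 0) (𝓝 0) := by
    simpa using (((hzlog.mul ((hslope.const_mul 2).add hb)).add ((hAlim.pow 2).const_mul 2)).sub
      hBlim).add (hz.mul ((hAlim.mul hb).sub (ha.mul hBlim)))
  have hlim := hnum.div hden one_ne_zero
  rw [zero_div] at hlim
  refine hlim.congr' ?_
  have hdiff : ∀ᶠ z in 𝓝[>] (0 : ℝ), AnalyticAt ℝ A z ∧ AnalyticAt ℝ B z :=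
    hle (hA.eventually_analyticAt.and hB.eventually_analyticAt)
  filter_upwards [self_mem_nhdsWithin, hdiff, hden.eventually_ne one_ne_zero]
    with z (hz : 0 < z) ⟨hAz, hBz⟩ hdz
  rw [Pi.div_apply, (hasDerivAt_log_add hz.ne' hAz.differentiableAt.hasDerivAt).deriv,
    (hasDerivAt_log_sq_add hz.ne' hAz.differentiableAt.hasDerivAt
      hBz.differentiableAt.hasDerivAt).deriv, wronskian_div_sub_sq_eq hz.ne' hdz]

end Periods

theorem xiP2_large_energy :
    Filter.Tendsto (fun E : ℝ => xiP2 E - 9 * E ^ 2 / (8 * Real.pi ^ 2))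
      Filter.atTop (nhds 0) := by
  have hperiods := tendsto_wronskian_div_deriv_sub_log_sq analyticAt_w1tilde analyticAt_w2tilde
    w1tilde_zero w2tilde_zero (ϖ₁ := w1) (ϖ₂ := w2) rfl rfl
  have hz : Tendsto (fun E : ℝ => exp (-3 * E)) atTop (𝓝[>] 0) :=
    tendsto_exp_atBot_nhdsGT.comp (tendsto_id.const_mul_atTop_of_neg (by norm_num))
  have hlim := (hperiods.comp hz).div_const (8 * π ^ 2)
  rw [zero_div] at hlim
  refine hlim.congr fun E => ?_
  simp only [Function.comp_apply, log_exp, xiP2]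
  ring
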